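/- (Theorem 5.1, change-of-variables identity for the trimmed stable case.) Let 0 < α < 1, r > 0, n ∈ ℕ with n ≥ 1, let g : (0,∞) → [0,∞), and set Θ*(x) := α x^{−α} 𝟙_{(0,1)}(x). Fix t > 0 and u₁, …, u_n ∈ (0,1), and define t_n := t and t_{i−1} := t / ∏_{j=i}^n u_j for i = 1, …, n. Then r^{[n]} g(t) [ ∏_{i=0}^{n−1} Θ*(t_i − t_{i+1}) / t_i ] · ∏_{i=1}^n (t_{i−1}/u_i) = (r^{[n]} / K_n) g(t) t^{−nα} 𝟙_{\{t < d(u₁,…,u_n)\}} ∏_{i=1}^n β_{iα, 1−α}(u_i), where r^{[n]} := r(r+1)⋯(r+n−1), K_n := Γ(n+1) / ( Γ(1−α)^n Γ(nα+1) ), d(u₁,…,u_n) := min_{1 ≤ i ≤ n} ( ∏_{j=i}^n u_j ) / (1−u_i), ∏_{i=1}^n (t_{i−1}/u_i) is the Jacobian of the change of variables (t₀,…,t_n) ↦ (u₁,…,u_n,t) with u_i = t_i/t_{i−1}, and β_{a,b}(u) := u^{a−1}(1−u)^{b−1} Γ(a+b)/(Γ(a)Γ(b)) is the Beta(a,b)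 density. -/
import Mathlib

open MeasureTheory Set Finset

/-- The Beta(a,b) density `β_{a,b}(u) = u^{a-1}(1-u)^{b-1} Γ(a+b)/(Γ(a)Γ(b))`. -/
noncomputable def betaDensity (a b u : ℝ) : ℝ :=
  u ^ (a - 1) * (1 - u) ^ (b - 1) * Real.Gamma (a + b) / (Real.Gamma a * Real.Gamma b)

lemma gamma_prod_aux (α : ℝ) (hα : 0 < α) (hα1 : α < 1) (n : ℕ) :
    ∏ k ∈ Finset.Icc 1 n,
        (Real.Gamma ((k : ℝ) * α + (1 - α)) / (Real.Gamma ((k : ℝ) * α) * Real.Gamma (1 - α)))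
      = α ^ n * Real.Gamma ((n : ℝ) + 1) /
          (Real.Gamma (1 - α) ^ n * Real.Gamma ((n : ℝ) * α + 1)) := by
  induction n with
  | zero => simp [Real.Gamma_one]
  | succ n ih =>
      rw [Finset.prod_Icc_succ_top (Nat.le_add_left 1 n), ih]
      have e1 : ((n + 1 : ℕ) : ℝ) * α + (1 - α) = (n : ℝ) * α + 1 := by push_cast; ring
      have e2 : ((n + 1 : ℕ) : ℝ) + 1 = ((n : ℝ) + 1) + 1 := by push_cast; ring
      have e3 : ((n + 1 : ℕ) : ℝ) * α + 1 = ((n : ℝ) + 1) * α + 1 := by push_cast; ring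
      have hg2 : Real.Gamma (((n : ℝ) + 1) + 1) = ((n : ℝ) + 1) * Real.Gamma ((n : ℝ) + 1) :=
        Real.Gamma_add_one (by positivity)
      have hg3 : Real.Gamma (((n : ℝ) + 1) * α + 1)
          = (((n : ℝ) + 1) * α) * Real.Gamma (((n : ℝ) + 1) * α) :=
        Real.Gamma_add_one (by positivity)
      have hne1 : Real.Gamma ((n : ℝ) * α + 1) ≠ 0 := (Real.Gamma_pos_of_pos (by positivity)).ne'
      have hne2 : Real.Gamma (((n : ℝ) + 1) * α) ≠ 0 := (Real.Gamma_pos_of_pos (by positivity)).ne'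
      have hne3 : Real.Gamma (1 - α) ≠ 0 := (Real.Gamma_pos_of_pos (by linarith)).ne'
      have hne4 : Real.Gamma ((n : ℝ) + 1) ≠ 0 := (Real.Gamma_pos_of_pos (by positivity)).ne'
      have e4 : ((n + 1 : ℕ) : ℝ) * α = ((n : ℝ) + 1) * α := by push_cast; ring
      rw [e1, e2, e3, e4, hg2, hg3]
      field_simp
      ring

/-- Theorem 5.1: change-of-variables identity for the trimmed stable case, with
`Θ*(x) = α x^{-α} 𝟙_{(0,1)}(x)`, `t_n = t`, `t_{i-1} = t / ∏_{j=i}^n u_j`: the joint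
density times the Jacobian equals `(r^{[n]}/K_n) g(t) t^{-nα} 𝟙_{t < d(u₁,…,u_n)}` times a
product of Beta(iα, 1-α) densities. -/
theorem change_of_variables_trimmed_stable
    (α r : ℝ) (hα : 0 < α) (hα1 : α < 1) (hr : 0 < r)
    (n : ℕ) (hn : 1 ≤ n)
    (g : ℝ → ℝ) (hg : ∀ x > (0 : ℝ), 0 ≤ g x)
    (Θs : ℝ → ℝ) (hΘs : ∀ x, Θs x = if x ∈ Ioo (0 : ℝ) 1 then α * x ^ (-α) else 0)
    (t : ℝ) (ht : 0 < t)
    (u : ℕ → ℝ) (hu : ∀ i ∈ Finset.Icc 1 n, u i ∈ Ioo (0 : ℝ) 1)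
    (ts : ℕ → ℝ) (hts : ∀ i ≤ n, ts i = t / ∏ j ∈ Finset.Icc (i + 1) n, u j)
    (K : ℝ) (hK : K = Real.Gamma (n + 1) / (Real.Gamma (1 - α) ^ n * Real.Gamma (n * α + 1)))
    (d : ℝ) (hd : d = (Finset.Icc 1 n).inf' (Finset.nonempty_Icc.2 hn)
      (fun i => (∏ j ∈ Finset.Icc i n, u j) / (1 - u i))) :
    (∏ i ∈ Finset.range n, (r + i)) * g t
        * (∏ i ∈ Finset.range n, Θs (ts i - ts (i + 1)) / ts i)
        * ∏ i ∈ Finset.Icc 1 n, ts (i - 1) / u i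
      = ((∏ i ∈ Finset.range n, (r + i)) / K) * g t * t ^ (-(n * α))
          * (if t < d then 1 else 0)
          * ∏ i ∈ Finset.Icc 1 n, betaDensity (i * α) (1 - α) (u i) := by
  set P : ℕ → ℝ := fun i => ∏ j ∈ Finset.Icc i n, u j with hPdef
  have hu' : ∀ k, 1 ≤ k → k ≤ n → 0 < u k ∧ u k < 1 := by
    intro k h1 h2
    exact ⟨(hu k (Finset.mem_Icc.2 ⟨h1, h2⟩)).1, (hu k (Finset.mem_Icc.2 ⟨h1, h2⟩)).2⟩
  have hPpos : ∀ i, 1 ≤ i → 0 < P i := by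
    intro i hi
    apply Finset.prod_pos
    intro j hj
    simp only [Finset.mem_Icc] at hj
    exact (hu' j (le_trans hi hj.1) hj.2).1
  have hts' : ∀ k ≤ n, ts k = t / P (k + 1) := fun k hk => hts k hk
  have htspos : ∀ k ≤ n, 0 < ts k := by
    intro k hk
    rw [hts' k hk]
    exact div_pos ht (hPpos _ (by omega))
  have hPsucc : ∀ k, 1 ≤ k → k ≤ n → P k = u k * P (k + 1) := by
    intro k h1 h2
    have e : Finset.Icc k n = insert k (Finset.Ioc k n) := (Finset.Ioc_insert_left h2).symm
    simp only [hPdef]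
    rw [e, Finset.prod_insert (by simp), Finset.Icc_add_one_left_eq_Ioc]
  have hdiff : ∀ k, 1 ≤ k → k ≤ n → ts (k - 1) - ts k = t * (1 - u k) / P k := by
    intro k h1 h2
    have hk1 : k - 1 + 1 = k := by omega
    rw [hts' (k - 1) (by omega), hts' k h2, hk1, hPsucc k h1 h2]
    have h0 : u k ≠ 0 := (hu' k h1 h2).1.ne'
    have h0' : P (k + 1) ≠ 0 := (hPpos _ (by omega)).ne'
    field_simp
  have hdiffpos : ∀ k, 1 ≤ k → k ≤ n → 0 < ts (k - 1) - ts k := by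
    intro k h1 h2
    rw [hdiff k h1 h2]
    have h1u : 0 < 1 - u k := by linarith [(hu' k h1 h2).2]
    exact div_pos (mul_pos ht h1u) (hPpos k h1)
  have hreidx : ∀ f : ℕ → ℝ, ∏ k ∈ Finset.Icc 1 n, f k = ∏ i ∈ Finset.range n, f (1 + i) := by
    intro f
    rw [← Finset.Ico_add_one_right_eq_Icc, Finset.prod_Ico_eq_prod_range]
    simp
  have hcomb : (∏ i ∈ Finset.range n, Θs (ts i - ts (i + 1)) / ts i)
      * ∏ i ∈ Finset.Icc 1 n, ts (i - 1) / u i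
      = ∏ i ∈ Finset.range n, Θs (ts i - ts (i + 1)) / u (1 + i) := by
    rw [hreidx (fun k => ts (k - 1) / u k), ← Finset.prod_mul_distrib]
    apply Finset.prod_congr rfl
    intro i hi
    simp only [Finset.mem_range] at hi
    have e : 1 + i - 1 = i := by omega
    rw [e]
    have hne : ts i ≠ 0 := (htspos i (by omega)).ne'
    rw [div_mul_div_comm, mul_comm (Θs _) (ts i), mul_div_mul_left _ _ hne]
  rw [mul_assoc, hcomb]
  by_cases hcase : t < d
  · simp only [if_pos hcase]
    have hΘval : ∀ k, 1 ≤ k → k ≤ n →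
        Θs (ts (k - 1) - ts k) = α * (t * (1 - u k) / P k) ^ (-α) := by
      intro k h1 h2
      have h1u : 0 < 1 - u k := by linarith [(hu' k h1 h2).2]
      rw [hΘs, if_pos, hdiff k h1 h2]
      rw [Set.mem_Ioo]
      constructor
      · exact hdiffpos k h1 h2
      · rw [hdiff k h1 h2, div_lt_one (hPpos k h1)]
        have hlt : t < P k / (1 - u k) := by
          refine lt_of_lt_of_le hcase ?_
          rw [hd]
          exact Finset.inf'_le _ (Finset.mem_Icc.2 ⟨h1, h2⟩)
        calc t * (1 - u k) < (P k / (1 - u k)) * (1 - u k) :=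
              mul_lt_mul_of_pos_right hlt h1u
          _ = P k := div_mul_cancel₀ _ h1u.ne'
    have hmid : (∏ i ∈ Finset.range n, Θs (ts i - ts (i + 1)) / u (1 + i))
        = ∏ k ∈ Finset.Icc 1 n, (α * t ^ (-α)) *
            ((1 - u k) ^ (-α) * ((P k) ^ α * (u k) ^ (-1 : ℝ))) := by
      rw [hreidx (fun k => (α * t ^ (-α)) *
            ((1 - u k) ^ (-α) * ((P k) ^ α * (u k) ^ (-1 : ℝ))))]
      apply Finset.prod_congr rfl
      intro i hi
      simp only [Finset.mem_range] at hi
      have h1 : 1 ≤ 1 + i := by omega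
      have h2 : 1 + i ≤ n := by omega
      have e : ts i - ts (i + 1) = ts (1 + i - 1) - ts (1 + i) := by
        congr 1 <;> congr 1 <;> omega
      rw [e, hΘval (1 + i) h1 h2]
      have hu0 : 0 < u (1 + i) := (hu' _ h1 h2).1
      have h1u : 0 < 1 - u (1 + i) := by linarith [(hu' _ h1 h2).2]
      have hp : 0 < P (1 + i) := hPpos _ h1
      have hx : (t * (1 - u (1 + i)) / P (1 + i)) ^ (-α)
          = t ^ (-α) * (1 - u (1 + i)) ^ (-α) * (P (1 + i)) ^ α := by
        rw [Real.div_rpow (by positivity) hp.le, Real.mul_rpow ht.le h1u.le,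
          Real.rpow_neg hp.le, div_eq_mul_inv, inv_inv]
      rw [hx, Real.rpow_neg_one]
      field_simp
    rw [hmid]
    have hbeta : ∀ k ∈ Finset.Icc 1 n, betaDensity ((k : ℝ) * α) (1 - α) (u k)
        = ((u k) ^ ((k : ℝ) * α - 1) * (1 - u k) ^ (-α))
          * (Real.Gamma ((k : ℝ) * α + (1 - α)) /
              (Real.Gamma ((k : ℝ) * α) * Real.Gamma (1 - α))) := by
      intro k hk
      rw [betaDensity]
      have e : (1 - α) - 1 = -α := by ring
      rw [e]
      ring
    have hsplitL : ∏ k ∈ Finset.Icc 1 n, ((α * t ^ (-α)) *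
          ((1 - u k) ^ (-α) * ((P k) ^ α * (u k) ^ (-1 : ℝ))))
        = (α * t ^ (-α)) ^ n *
          ∏ k ∈ Finset.Icc 1 n, ((1 - u k) ^ (-α) * ((P k) ^ α * (u k) ^ (-1 : ℝ))) := by
      rw [Finset.prod_mul_distrib, Finset.prod_const, Nat.card_Icc]
      norm_num
    have hsplitR : ∏ k ∈ Finset.Icc 1 n, betaDensity ((k : ℝ) * α) (1 - α) (u k)
        = (∏ k ∈ Finset.Icc 1 n, ((u k) ^ ((k : ℝ) * α - 1) * (1 - u k) ^ (-α)))
          * (α ^ n * Real.Gamma ((n : ℝ) + 1) /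
              (Real.Gamma (1 - α) ^ n * Real.Gamma ((n : ℝ) * α + 1))) := by
      rw [Finset.prod_congr rfl hbeta, Finset.prod_mul_distrib, gamma_prod_aux α hα hα1 n]
    rw [hsplitL, hsplitR]
    -- now handle ∏ (1-u)^(-α) * P^α * u^(-1)
    have huexp : ∏ k ∈ Finset.Icc 1 n,
          ((1 - u k) ^ (-α) * ((P k) ^ α * (u k) ^ (-1 : ℝ)))
        = ∏ k ∈ Finset.Icc 1 n, ((u k) ^ ((k : ℝ) * α - 1) * (1 - u k) ^ (-α)) := by
      rw [Finset.prod_mul_distrib, Finset.prod_mul_distrib, Finset.prod_mul_distrib]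
      have hPprod : ∏ k ∈ Finset.Icc 1 n, (P k) ^ α
          = ∏ j ∈ Finset.Icc 1 n, (u j) ^ (α * (j : ℝ)) := by
        have h1 : ∀ k ∈ Finset.Icc 1 n, (P k) ^ α = ∏ j ∈ Finset.Icc k n, (u j) ^ α := by
          intro k hk
          simp only [Finset.mem_Icc] at hk
          simp only [hPdef]
          rw [← Real.finset_prod_rpow]
          intro j hj
          simp only [Finset.mem_Icc] at hj
          exact (hu' j (le_trans hk.1 hj.1) hj.2).1.le
        rw [Finset.prod_congr rfl h1]
        rw [Finset.prod_comm' (t' := Finset.Icc 1 n) (s' := fun j => Finset.Icc 1 j)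
          (by intro x y; simp only [Finset.mem_Icc]; omega)]
        apply Finset.prod_congr rfl
        intro j hj
        simp only [Finset.mem_Icc] at hj
        rw [Finset.prod_const, Nat.card_Icc]
        have e : j + 1 - 1 = j := by omega
        rw [e, ← Real.rpow_natCast ((u j) ^ α) j, ← Real.rpow_mul (hu' j hj.1 hj.2).1.le]
      rw [hPprod, ← Finset.prod_mul_distrib]
      have h2 : ∀ k ∈ Finset.Icc 1 n,
          (u k) ^ (α * (k : ℝ)) * (u k) ^ (-1 : ℝ) = (u k) ^ ((k : ℝ) * α - 1) := by
        intro k hk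
        simp only [Finset.mem_Icc] at hk
        rw [← Real.rpow_add (hu' k hk.1 hk.2).1]
        congr 1
        ring
      rw [Finset.prod_congr rfl h2]
      ring
    rw [huexp]
    -- scalar part
    have hKne : K ≠ 0 := by
      rw [hK]
      have g1 : 0 < Real.Gamma ((n : ℝ) + 1) := Real.Gamma_pos_of_pos (by positivity)
      have g2 : 0 < Real.Gamma (1 - α) := Real.Gamma_pos_of_pos (by linarith)
      have g3 : 0 < Real.Gamma ((n : ℝ) * α + 1) := Real.Gamma_pos_of_pos (by positivity)
      positivity
    have ht1 : (t ^ (-α)) ^ n = t ^ (-((n : ℝ) * α)) := by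
      rw [← Real.rpow_natCast (t ^ (-α)) n, ← Real.rpow_mul ht.le]
      congr 1
      ring
    have hKval : Real.Gamma ((n : ℝ) + 1)
        = K * (Real.Gamma (1 - α) ^ n * Real.Gamma ((n : ℝ) * α + 1)) := by
      rw [hK]
      have g2 : Real.Gamma (1 - α) ≠ 0 := (Real.Gamma_pos_of_pos (by linarith)).ne'
      have g3 : Real.Gamma ((n : ℝ) * α + 1) ≠ 0 := (Real.Gamma_pos_of_pos (by positivity)).ne'
      field_simp
    rw [mul_pow, ht1, hKval]
    have g2 : Real.Gamma (1 - α) ≠ 0 := (Real.Gamma_pos_of_pos (by linarith)).ne'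
    have g3 : Real.Gamma ((n : ℝ) * α + 1) ≠ 0 := (Real.Gamma_pos_of_pos (by positivity)).ne'
    field_simp
  · simp only [if_neg hcase]
    obtain ⟨k₀, hk₀mem, hk₀⟩ := Finset.exists_mem_eq_inf' (Finset.nonempty_Icc.2 hn)
      (fun i => (∏ j ∈ Finset.Icc i n, u j) / (1 - u i))
    have hk₀' := Finset.mem_Icc.1 hk₀mem
    have h1u : 0 < 1 - u k₀ := by linarith [(hu' k₀ hk₀'.1 hk₀'.2).2]
    have hge : P k₀ / (1 - u k₀) ≤ t := by
      have : d = P k₀ / (1 - u k₀) := by rw [hd, hk₀]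
      rw [← this]
      exact not_lt.1 hcase
    have hΘ0 : Θs (ts (k₀ - 1) - ts k₀) = 0 := by
      rw [hΘs, if_neg]
      rw [Set.mem_Ioo]
      push_neg
      intro _
      rw [hdiff k₀ hk₀'.1 hk₀'.2, le_div_iff₀ (hPpos _ hk₀'.1)]
      have := (div_le_iff₀ h1u).1 hge
      linarith
    have hzero : (∏ i ∈ Finset.range n, Θs (ts i - ts (i + 1)) / u (1 + i)) = 0 := by
      apply Finset.prod_eq_zero (i := k₀ - 1) (Finset.mem_range.2 (by omega))
      have e : k₀ - 1 + 1 = k₀ := by omega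
      rw [e, hΘ0, zero_div]
    rw [hzero]
    ring
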